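/- Let μ be a Z^2-invariant ergodic Borel probability measure on X. Then μ(E) = 0, where E is the set of points of Y extremal in their σ-component. -/

import Mathlib

open MeasureTheory Filter

/-- Configurations: `ℤ²`-indexed families of elements of `ℤ/2ℤ`. -/
abbrev Config := ℤ → ℤ → ZMod 2

/-- The three-dot relation. -/
def threeDot (x : Config) : Prop :=
  ∀ k l : ℤ, x k l + x (k + 1) l + x k (l + 1) = 0

/-- The three-dot system `X`. -/
def Xset : Set Config := {x | threeDot x}

/-- The `ℤ²`-shift action: `shift k l x = T^k S^l x`. -/
def shift (k l : ℤ) (x : Config) : Config := fun a b => x (a + k) (b + l)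

/-- The shift `T`. -/
def Tm : Config → Config := shift 1 0

/-- The shift `S`. -/
def Sm : Config → Config := shift 0 1

/-- `Y` : points of `X` with coordinate `1` at the origin. -/
def Yset : Set Config := {x | threeDot x ∧ x 0 0 = 1}

/-- The map `σ : Y → Y`, extended to all configurations:
it equals `Tx` if `Tx` has a `1` at the origin, and `Sx` otherwise. -/
def sig (x : Config) : Config := if x 1 0 = 1 then Tm x else Sm x

/-- `Z` : points of `Y` with σ-antecedents of every depth (equivalently,
infinitely many σ-antecedents). -/
def Zset : Set Config := {x | x ∈ Yset ∧ ∀ n : ℕ, ∃ y ∈ Yset, sig^[n] y = x}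

/-- `Z₂` : points of `Z` having two distinct σ-preimages in `Z`. -/
def Z2set : Set Config :=
  {x | x ∈ Zset ∧ ∃ y z, y ≠ z ∧ y ∈ Zset ∧ z ∈ Zset ∧ sig y = x ∧ sig z = x}

/-- The σ-component of a point `x` of `Y`: points of the `ℤ²`-orbit of `x`
lying in `Y` whose forward σ-trajectory meets that of `x`. -/
def sigComp (x : Config) : Set Config :=
  {y | (∃ k l : ℤ, y = shift k l x) ∧ y ∈ Yset ∧ ∃ p q : ℕ, sig^[p] x = sig^[q] y}

/-- Aperiodicity of a configuration for the `ℤ²`-action. -/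
def Aperiodic (x : Config) : Prop := ∀ k l : ℤ, shift k l x = x → k = 0 ∧ l = 0

/-- `E` : points of `Y` that are extremal in their σ-component. -/
def Eset : Set Config :=
  {x | x ∈ Yset ∧ ∀ k l : ℤ, shift k l x ∈ sigComp x → shift k l x ≠ x →
    (0 < k + l ∨ (k + l = 0 ∧ 0 ≤ l))}

/-!
Two distinct extremal points never lie in one σ-component: if the forward σ-orbits of `y` and
`T^k S^l y` merge, each point lies in the other's component, and extremality for `(k, l)` and for
`(-k, -l)` forces `k = l = 0`. This needs extremal points to be aperiodic. A period of nonzero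
coordinate sum makes `σ x` a translate of `x` lying on a lower antidiagonal; a period `(K, -K)`
makes the antidiagonal words of `x` a bi-infinite orbit of a self-map of a finite set; that orbit
is periodic, which gives `x` a vertical period.

Following every point of the box `[0, n)²` along σ up to the antidiagonal `k + l = 2n` is thus
injective on extremal points, so at most `2n + 1` points of the box are extremal. As the shifts
preserve `μ`, this gives `n² μ(E) ≤ 2n + 1` for every `n`.
-/

open scoped ENNReal

section General

open Finset

lemma finite_periodic {β : Type*} [Finite β] {K : ℤ} (hK : 0 < K) :
    Finite {v : ℤ → β // Function.Periodic v K} := by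
  refine Finite.of_injective (fun v (i : Set.Ico 0 K) => v.1 i) fun v w hvw => ?_
  have hmod (u : {v : ℤ → β // Function.Periodic v K}) (j : ℤ) : u.1 j = u.1 (j % K) := by
    rw [Int.emod_def, mul_comm]
    exact (u.2.sub_int_mul_eq (j / K)).symm
  ext j
  rw [hmod v, hmod w]
  exact congrFun hvw ⟨j % K, Int.emod_nonneg j hK.ne', Int.emod_lt_of_pos j hK⟩

lemma exists_periodic_of_int_orbit {α : Type*} [Finite α] (f : α → α) (u : ℤ → α)
    (hu : ∀ n, u (n + 1) = f (u n)) : ∃ P : ℕ, 0 < P ∧ Function.Periodic u P := by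
  have := Fintype.ofFinite α
  have hiter (n : ℤ) (m : ℕ) : f^[m] (u n) = u (n + m) := by
    induction m with
    | zero => simp
    | succ m ih => rw [Function.iterate_succ_apply', ih, ← hu]; push_cast; ring_nf
  refine ⟨(Fintype.card α).factorial, Nat.factorial_pos _, fun n => ?_⟩
  have hper : u n ∈ Function.periodicPts f := by
    obtain ⟨i, j, hij, heq⟩ := Finite.exists_ne_map_eq_of_infinite fun i : ℕ => u (n - i)
    wlog hlt : i < j generalizing i j
    · exact this j i hij.symm heq.symm (by omega)
    refine Function.mk_mem_periodicPts (n := j - i) (by omega) ?_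
    have hback : u (n - (j - i : ℕ)) = u n := by
      calc u (n - (j - i : ℕ)) = f^[i] (u (n - j)) := by
            rw [hiter]; congr 1; push_cast [hlt.le]; ring
        _ = u n := by rw [← heq, hiter]; simp
    calc f^[j - i] (u n) = f^[j - i] (u (n - (j - i : ℕ))) := by rw [hback]
      _ = u n := by rw [hiter]; simp
  rw [← hiter]
  exact (Function.isPeriodicPt_factorial_card_of_mem_periodicPts hper).eq

variable {α : Type*} [MeasurableSpace α] {μ : Measure α}

lemma measurePreserving_of_map_add {f : ℤ → α → α} (hf : ∀ n, Measurable (f n)) (h0 : f 0 = id)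
    (hadd : ∀ m n, f (m + n) = f m ∘ f n) (h1 : MeasurePreserving (f 1) μ μ) (n : ℤ) :
    MeasurePreserving (f n) μ μ := by
  have hneg : MeasurePreserving (f (-1)) μ μ := by
    refine ⟨hf _, ?_⟩
    conv_lhs => rw [← h1.map_eq]
    rw [Measure.map_map (hf _) h1.measurable, ← hadd, neg_add_cancel, h0, Measure.map_id]
  induction n using Int.induction_on with
  | zero => rw [h0]; exact .id μ
  | succ n ih => rw [hadd]; exact ih.comp h1
  | pred n ih => rw [sub_eq_add_neg, hadd]; exact ih.comp hneg

open Classical in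
lemma card_mul_measure_le_of_card_filter_le {ι β : Type*} [MeasurableSpace β] {ν : Measure β}
    {g : ι → α → β} {s : Finset ι} {E : Set β} {C : ℕ}
    (hg : ∀ i ∈ s, MeasurePreserving (g i) μ ν) (hE : MeasurableSet E)
    (hC : ∀ x, #{i ∈ s | g i x ∈ E} ≤ C) :
    #s * ν E ≤ C * μ Set.univ :=
  calc (#s : ℝ≥0∞) * ν E = ∑ i ∈ s, μ (g i ⁻¹' E) := by
        rw [sum_congr rfl fun i hi => (hg i hi).measure_preimage hE.nullMeasurableSet, sum_const,
          nsmul_eq_mul]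
    _ = ∫⁻ x, ∑ i ∈ s, (g i ⁻¹' E).indicator 1 x ∂μ := by
        rw [lintegral_finsetSum _ fun i hi => measurable_one.indicator ((hg i hi).measurable hE)]
        exact sum_congr rfl fun i hi => (lintegral_indicator_one ((hg i hi).measurable hE)).symm
    _ = ∫⁻ x, (#{i ∈ s | g i x ∈ E} : ℝ≥0∞) ∂μ := by
        simp only [Set.indicator_apply, Set.mem_preimage, Pi.one_apply, sum_boole]
    _ ≤ ∫⁻ _, (C : ℝ≥0∞) ∂μ := lintegral_mono fun x => Nat.cast_le.mpr (hC x)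
    _ = C * μ Set.univ := lintegral_const _

lemma eq_zero_of_forall_mul_self_mul_le {a : ℝ≥0∞}
    (h : ∀ n : ℕ, (n * n : ℝ≥0∞) * a ≤ 2 * n + 1) : a = 0 := by
  by_contra ha
  obtain ⟨n, hn⟩ := ENNReal.exists_nat_mul_gt ha (b := 3) (by simp)
  have hn0 : n ≠ 0 := by rintro rfl; simp at hn
  have hle : (n : ℝ≥0∞) * (n * a) ≤ n * 3 :=
    calc (n : ℝ≥0∞) * (n * a) = n * n * a := (mul_assoc _ _ _).symm
      _ ≤ 2 * n + 1 := h n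
      _ ≤ n * 3 := by exact_mod_cast (by omega : 2 * n + 1 ≤ n * 3)
  exact not_le.mpr hn ((ENNReal.mul_le_mul_iff_right (by simpa) (by simp)).mp hle)

end General

section Shift

lemma shift_shift (k l k' l' : ℤ) (x : Config) :
    shift k l (shift k' l' x) = shift (k + k') (l + l') x := by
  funext a b
  simp only [shift, add_assoc]

lemma shift_zero (x : Config) : shift 0 0 x = x := by
  funext a b
  simp [shift]

lemma shift_neg_shift (k l : ℤ) (x : Config) : shift (-k) (-l) (shift k l x) = x := by
  rw [shift_shift, neg_add_cancel, neg_add_cancel, shift_zero]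

lemma shift_neg_eq_self {k l : ℤ} {x : Config} (h : shift k l x = x) :
    shift (-k) (-l) x = x := by
  simpa only [h] using shift_neg_shift k l x

lemma threeDot_shift {x : Config} (h : threeDot x) (k l : ℤ) : threeDot (shift k l x) := by
  intro a b
  simpa only [shift, add_right_comm _ (1 : ℤ)] using h (a + k) (b + l)

lemma shift_mem_Yset {x : Config} (h : threeDot x) {k l : ℤ} (h1 : x k l = 1) :
    shift k l x ∈ Yset :=
  ⟨threeDot_shift h k l, by simpa [shift] using h1⟩

end Shift

section Sigma

lemma sig_eq_shift_or (y : Config) : sig y = shift 1 0 y ∨ sig y = shift 0 1 y := by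
  unfold sig Tm Sm
  split_ifs <;> simp

lemma iterate_sig_eq_shift (y : Config) (n : ℕ) :
    ∃ a b : ℕ, a + b = n ∧ sig^[n] y = shift a b y := by
  induction n with
  | zero => exact ⟨0, 0, rfl, (shift_zero y).symm⟩
  | succ n ih =>
    obtain ⟨a, b, hab, hn⟩ := ih
    rw [Function.iterate_succ_apply', hn]
    rcases sig_eq_shift_or (shift a b y) with h | h
    · exact ⟨a + 1, b, by omega, by rw [h, shift_shift]; push_cast; ring_nf⟩
    · exact ⟨a, b + 1, by omega, by rw [h, shift_shift]; push_cast; ring_nf⟩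

lemma mapsTo_sig : Set.MapsTo sig Yset Yset := by
  rintro y ⟨h3, h0⟩
  unfold sig Tm Sm
  split_ifs with h
  · exact shift_mem_Yset h3 h
  · have key : ∀ a b : ZMod 2, 1 + a + b = 0 → a ≠ 1 → b = 1 := by decide
    exact shift_mem_Yset h3 (key _ _ (by simpa [h0] using h3 0 0) h)

lemma sig_ne_self {x : Config} (hx : x ∈ Yset) : sig x ≠ x := by
  obtain ⟨h3, h0⟩ := hx
  have key : ∀ a b : ZMod 2, a + a + b = 0 → b ≠ 1 := by decide
  rcases sig_eq_shift_or x with h | h <;> rw [h] <;> intro hfix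
  · have h' : x 1 (-1) = x 0 (-1) := by simpa [shift] using congrFun (congrFun hfix 0) (-1)
    exact key _ _ (by simpa [h'] using h3 0 (-1)) h0
  · have h' : x (-1) 1 = x (-1) 0 := by simpa [shift] using congrFun (congrFun hfix (-1)) 0
    exact key (x (-1) 0) _ (by simpa [h', add_right_comm] using h3 (-1) 0) h0

end Sigma

section Periods

lemma not_mem_Eset_of_shift_eq {x : Config} (hx : x ∈ Yset) {k l : ℤ} (hper : shift k l x = x)
    (hsum : k + l ≠ 0) : x ∉ Eset := by
  wlog hneg : k + l < 0 generalizing k l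
  · exact this (shift_neg_eq_self hper) (by omega) (by omega)
  intro hE
  obtain ⟨a, b, hab, hsig⟩ := iterate_sig_eq_shift x 1
  have hshift : shift (a + 2 * k) (b + 2 * l) x = sig x :=
    calc shift (a + 2 * k) (b + 2 * l) x = shift a b (shift k l (shift k l x)) := by
          simp only [shift_shift]; congr 1 <;> ring
      _ = sig x := by rw [hper, hper]; exact hsig.symm
  have hmem : sig x ∈ sigComp x := ⟨⟨_, _, hshift.symm⟩, mapsTo_sig hx, 1, 0, rfl⟩
  have := hE.2 _ _ (hshift ▸ hmem) (hshift ▸ sig_ne_self hx)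
  omega

def antidiag (x : Config) (n : ℤ) : ℤ → ZMod 2 := fun j => x j (n - j)

lemma antidiag_periodic {x : Config} {K : ℤ} (hper : shift K (-K) x = x) (n : ℤ) :
    Function.Periodic (antidiag x n) K := by
  intro j
  have := congrFun (congrFun hper j) (n - j)
  simp only [shift] at this
  rw [antidiag, antidiag, ← this]
  congr 1
  ring

lemma antidiag_sub_one {x : Config} (h : threeDot x) (n j : ℤ) :
    antidiag x (n - 1) j = antidiag x n j + antidiag x n (j + 1) := by
  have key : ∀ a b c : ZMod 2, a + b + c = 0 → a = c + b := by decide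
  simp only [antidiag]
  refine key _ _ _ ?_
  convert h j (n - 1 - j) using 4 <;> ring

lemma exists_shift_zero_eq_self {x : Config} (h : threeDot x) {K : ℤ} (hK : K ≠ 0)
    (hper : shift K (-K) x = x) : ∃ P : ℤ, 0 < P ∧ shift 0 P x = x := by
  wlog hpos : 0 < K generalizing K
  · exact this (neg_ne_zero.mpr hK) (shift_neg_eq_self hper) (by omega)
  -- the antidiagonal words, read downwards, form an orbit of `v ↦ v + v (· + 1)` on the
  -- finite set of `K`-periodic words
  have := finite_periodic (β := ZMod 2) hpos
  let u (n : ℤ) : {v : ℤ → ZMod 2 // Function.Periodic v K} :=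
    ⟨antidiag x (-n), antidiag_periodic hper _⟩
  let g (v : {v : ℤ → ZMod 2 // Function.Periodic v K}) :
      {v : ℤ → ZMod 2 // Function.Periodic v K} :=
    ⟨fun j => v.1 j + v.1 (j + 1),
      fun j => by simp only [v.2 j, add_right_comm j K, v.2 (j + 1)]⟩
  obtain ⟨P, hP, hu⟩ := exists_periodic_of_int_orbit g u fun n =>
    Subtype.ext <| funext fun j => by
      simp only [u, g, neg_add, ← sub_eq_add_neg, antidiag_sub_one h]
  refine ⟨P, by exact_mod_cast hP, funext fun a => funext fun b => ?_⟩
  have := congrFun (congrArg Subtype.val (hu (-(a + b + P)))) a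
  simp only [u, antidiag, shift] at this ⊢
  convert this.symm using 2 <;> ring

lemma aperiodic_of_mem_Eset {x : Config} (hx : x ∈ Eset) : Aperiodic x := by
  intro k l hper
  by_contra hne
  rcases eq_or_ne (k + l) 0 with hsum | hsum
  · obtain rfl : l = -k := by omega
    obtain ⟨P, hP, hvert⟩ := exists_shift_zero_eq_self hx.1.1 (by omega) hper
    exact not_mem_Eset_of_shift_eq hx.1 hvert (by omega) hx
  · exact not_mem_Eset_of_shift_eq hx.1 hper hsum hx

lemma eq_zero_of_iterate_sig_eq {y : Config} (hy : y ∈ Eset) {k l : ℤ}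
    (hy' : shift k l y ∈ Eset) {m m' : ℕ} (h : sig^[m] y = sig^[m'] (shift k l y)) :
    k = 0 ∧ l = 0 := by
  by_cases hfix : shift k l y = y
  · exact aperiodic_of_mem_Eset hy k l hfix
  have hback := shift_neg_shift k l y
  have h1 := hy.2 k l ⟨⟨k, l, rfl⟩, hy'.1, m, m', h⟩ hfix
  have h2 := hy'.2 (-k) (-l)
    (by rw [hback]; exact ⟨⟨-k, -l, hback.symm⟩, hy.1, m', m, h.symm⟩)
    (by rw [hback]; exact Ne.symm hfix)
  omega

end Periods

section Counting

open Finset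

open Classical in
lemma card_filter_shift_mem_Eset_le (x : Config) (n : ℕ) :
    #{p ∈ range n ×ˢ range n | shift p.1 p.2 x ∈ Eset} ≤ 2 * n + 1 := by
  set F := {p ∈ range n ×ˢ range n | shift p.1 p.2 x ∈ Eset}
  have hF {p : ℕ × ℕ} (hp : p ∈ F) : p.1 < n ∧ p.2 < n ∧ shift p.1 p.2 x ∈ Eset := by
    simpa [F, and_assoc] using hp
  let f (p : ℕ × ℕ) : Config := sig^[2 * n - (p.1 + p.2)] (shift p.1 p.2 x)
  let A := (range (2 * n + 1)).image fun c : ℕ => shift c (2 * n - c : ℕ) x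
  have hmaps : ∀ p ∈ F, f p ∈ A := by
    intro p hp
    obtain ⟨h1, h2, -⟩ := hF hp
    obtain ⟨a, b, hab, hsig⟩ := iterate_sig_eq_shift (shift p.1 p.2 x) (2 * n - (p.1 + p.2))
    refine mem_image.mpr ⟨p.1 + a, mem_range.mpr (by omega), ?_⟩
    simp only [f, hsig, shift_shift]
    congr 1 <;> omega
  have hinj : Set.InjOn f F := by
    intro p hp p' hp' hpp'
    obtain ⟨-, -, hE⟩ := hF hp
    obtain ⟨-, -, hE'⟩ := hF hp'
    have hrel : shift (p'.1 : ℤ) p'.2 x =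
        shift ((p'.1 : ℤ) - p.1) ((p'.2 : ℤ) - p.2) (shift p.1 p.2 x) := by
      rw [shift_shift]; congr 1 <;> ring
    rw [hrel] at hE'
    have := eq_zero_of_iterate_sig_eq hE hE' (by rw [← hrel]; exact hpp')
    exact Prod.ext (by omega) (by omega)
  calc #F ≤ #A := card_le_card_of_injOn f hmaps hinj
    _ ≤ 2 * n + 1 := card_image_le.trans (card_range _).le

end Counting

section Measurability

@[fun_prop]
lemma measurable_shift (k l : ℤ) : Measurable (shift k l) := by
  unfold shift
  fun_prop

lemma measurePreserving_shift {μ : Measure Config} (hT : MeasurePreserving Tm μ μ)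
    (hS : MeasurePreserving Sm μ μ) (k l : ℤ) : MeasurePreserving (shift k l) μ μ := by
  have hk := measurePreserving_of_map_add (f := fun k => shift k 0)
    (fun _ => measurable_shift _ _) (funext shift_zero)
    (fun _ _ => funext fun _ => by simp [shift_shift]) hT k
  have hl := measurePreserving_of_map_add (f := fun l => shift 0 l)
    (fun _ => measurable_shift _ _) (funext shift_zero)
    (fun _ _ => funext fun _ => by simp [shift_shift]) hS l
  rw [show shift k l = shift k 0 ∘ shift 0 l from funext fun _ => by simp [shift_shift]]
  exact hk.comp hl

lemma measurable_sig : Measurable sig := by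
  unfold sig Tm Sm
  exact Measurable.ite (measurableSet_setOfPred.mpr (by fun_prop)) (by fun_prop) (by fun_prop)

lemma measurableSet_Yset : MeasurableSet Yset :=
  measurableSet_setOfPred.mpr (by unfold threeDot; fun_prop)

lemma measurableSet_Eset : MeasurableSet Eset := by
  have := measurableSet_Yset
  have hiter (n : ℕ) : Measurable sig^[n] := measurable_sig.iterate n
  refine measurableSet_setOfPred.mpr ?_
  simp only [sigComp, Set.mem_ofPred_eq]
  fun_prop

end Measurability

theorem stmt7_general (μ : Measure Config) [IsProbabilityMeasure μ]
    (hT : MeasurePreserving Tm μ μ) (hS : MeasurePreserving Sm μ μ) :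
    μ Eset = 0 := by
  classical
  refine eq_zero_of_forall_mul_self_mul_le fun n => ?_
  have h := card_mul_measure_le_of_card_filter_le (s := Finset.range n ×ˢ Finset.range n)
    (g := fun p : ℕ × ℕ => shift p.1 p.2) (fun p _ => measurePreserving_shift hT hS p.1 p.2)
    measurableSet_Eset (card_filter_shift_mem_Eset_le · n)
  simpa [Finset.card_product] using h

/-- A `ℤ²`-invariant ergodic probability measure on `X` gives measure zero
to the set of extremal points. -/
theorem stmt7 (μ : Measure Config) [IsProbabilityMeasure μ]
    (hX : μ Xset = 1)
    (hT : MeasurePreserving Tm μ μ) (hS : MeasurePreserving Sm μ μ)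
    (herg : ∀ A : Set Config, MeasurableSet A → Tm ⁻¹' A = A → Sm ⁻¹' A = A →
      μ A = 0 ∨ μ A = 1) :
    μ Eset = 0 :=
  stmt7_general μ hT hS
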